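/- arXiv:0901.2442 — 2 statements merged into one kernel-verified Lean document; each statement's English description precedes it below -/
import Mathlib

section
/- For a finite group G acting on a compact Riemann surface Y with branch data (g(Y); n(1),...,n(k)) where all n(b) ≥ 2, if (2 − 2g(Y)) − Σ_b (1 − 1/n(b)) < 0, then (2g(Y) − 2) + Σ_b (1 − 1/n(b)) ≥ 1/42, with equality exactly for g(Y) = 0 and branch data (2,3,7). -/
/-!
Each summand `1 - 1/nᵢ` lies in `[1/2, 1)`. Hence a positive value is at least `1/2` when
`g ≥ 1`. When `g = 0` there are at least three branch points; five or more give at least `1/2`,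
and four give at least `1/6` since their orders cannot all be `2`. For three branch points of
orders `a ≤ b ≤ c` the value is `1 - (1/a + 1/b + 1/c)`. Since the orders are integers,
`1/a + 1/b + 1/c < 1` forces `c ≥ 7` when `(a, b) = (2, 3)`, and every admissible triple
other than `(2, 3, 7)` has `1/a + 1/b + 1/c ≤ 23/24 < 41/42`, the bound attained at `(2, 3, 8)`.
-/

/-- `-χ^orb` of the orbifold of genus `g` with cone points of orders `l`. -/
def negOrbifoldEulerChar (g : ℕ) (l : List ℕ) : ℚ :=
  2 * g - 2 + (l.map fun m : ℕ => 1 - 1 / (m : ℚ)).sum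

@[simp]
theorem negOrbifoldEulerChar_nil (g : ℕ) : negOrbifoldEulerChar g [] = 2 * g - 2 := by
  simp [negOrbifoldEulerChar]

@[simp]
theorem negOrbifoldEulerChar_cons (g a : ℕ) (l : List ℕ) :
    negOrbifoldEulerChar g (a :: l) = negOrbifoldEulerChar g l + (1 - 1 / a) := by
  simp only [negOrbifoldEulerChar, List.map_cons, List.sum_cons]
  ring

theorem negOrbifoldEulerChar_ofFn (g : ℕ) {k : ℕ} (n : Fin k → ℕ) :
    negOrbifoldEulerChar g (List.ofFn n) = 2 * g - 2 + ∑ i, (1 - 1 / (n i : ℚ)) := by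
  rw [negOrbifoldEulerChar, List.map_ofFn, List.sum_ofFn]
  rfl

theorem List.Perm.negOrbifoldEulerChar_eq {l l' : List ℕ} (h : l.Perm l') (g : ℕ) :
    negOrbifoldEulerChar g l = negOrbifoldEulerChar g l' := by
  rw [negOrbifoldEulerChar, negOrbifoldEulerChar, (h.map _).sum_eq]

theorem negOrbifoldEulerChar_of_coe_eq_two_three_seven {l : List ℕ}
    (h : (l : Multiset ℕ) = {2, 3, 7}) : negOrbifoldEulerChar 0 l = 1 / 42 := by
  rw [(Multiset.coe_eq_coe.mp (h.trans rfl) : l.Perm [2, 3, 7]).negOrbifoldEulerChar_eq]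
  norm_num [negOrbifoldEulerChar]

theorem Nat.lt_of_one_div_lt_one_div {m c : ℕ} (hc : 0 < c) (h : (1 / c : ℚ) < 1 / m) :
    m < c := by
  exact_mod_cast _root_.lt_of_one_div_lt_one_div (by exact_mod_cast hc) h

theorem Nat.one_div_cast_le_one_div_cast {m c : ℕ} (hm : 0 < m) (h : m ≤ c) :
    (1 / c : ℚ) ≤ 1 / m :=
  one_div_le_one_div_of_le (by exact_mod_cast hm) (by exact_mod_cast h)

theorem one_half_le_one_sub_one_div {m : ℕ} (hm : 2 ≤ m) : (1 / 2 : ℚ) ≤ 1 - 1 / m := by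
  have := Nat.one_div_cast_le_one_div_cast two_pos hm
  push_cast at this
  linarith

theorem negOrbifoldEulerChar_le_two_mul_sub_two_add_length (g : ℕ) (l : List ℕ) :
    negOrbifoldEulerChar g l ≤ 2 * g - 2 + l.length := by
  have := List.sum_le_card_nsmul (l.map fun m : ℕ => 1 - 1 / (m : ℚ)) 1 (by
    simp only [List.mem_map, forall_exists_index, and_imp, forall_apply_eq_imp_iff₂]
    exact fun m _ => sub_le_self 1 (by positivity))
  rw [List.length_map, nsmul_eq_mul, mul_one] at this
  rw [negOrbifoldEulerChar]
  linarith

theorem two_mul_sub_two_add_length_div_two_le_negOrbifoldEulerChar (g : ℕ) {l : List ℕ}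
    (hl : ∀ m ∈ l, 2 ≤ m) : 2 * g - 2 + l.length / 2 ≤ negOrbifoldEulerChar g l := by
  have := List.card_nsmul_le_sum (l.map fun m : ℕ => 1 - 1 / (m : ℚ)) (1 / 2) (by
    simpa only [List.mem_map, forall_exists_index, and_imp, forall_apply_eq_imp_iff₂] using
      fun m hm => one_half_le_one_sub_one_div (hl m hm))
  rw [List.length_map, nsmul_eq_mul, ← div_eq_mul_one_div] at this
  rw [negOrbifoldEulerChar]
  linarith

theorem half_le_negOrbifoldEulerChar_of_one_le {g : ℕ} (hg : 1 ≤ g) {l : List ℕ}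
    (hl : ∀ m ∈ l, 2 ≤ m) (hpos : 0 < negOrbifoldEulerChar g l) :
    1 / 2 ≤ negOrbifoldEulerChar g l := by
  rcases l with _ | ⟨a, t⟩
  · rw [negOrbifoldEulerChar_nil] at hpos ⊢
    have hg1 : 1 < g := by exact_mod_cast (show (1 : ℚ) < g by linarith)
    have : (2 : ℚ) ≤ g := by exact_mod_cast hg1
    linarith
  · have hbound := two_mul_sub_two_add_length_div_two_le_negOrbifoldEulerChar g hl
    have hg' : (1 : ℚ) ≤ g := by exact_mod_cast hg
    rw [List.length_cons, Nat.cast_succ] at hbound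
    linarith [(t.length.cast_nonneg : (0 : ℚ) ≤ t.length)]

theorem eq_two_three_seven_or_one_div_add_one_div_add_one_div_lt {a b c : ℕ} (ha : 2 ≤ a)
    (hab : a ≤ b) (hbc : b ≤ c) (h : (1 / a + 1 / b + 1 / c : ℚ) < 1) :
    (a = 2 ∧ b = 3 ∧ c = 7) ∨ (1 / a + 1 / b + 1 / c : ℚ) < 41 / 42 := by
  have hba := Nat.one_div_cast_le_one_div_cast (by omega) hab
  have hcb := Nat.one_div_cast_le_one_div_cast (by omega) hbc
  obtain rfl | rfl | ha4 : a = 2 ∨ a = 3 ∨ 4 ≤ a := by omega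
  · obtain rfl | rfl | hb4 : b = 2 ∨ b = 3 ∨ 4 ≤ b := by omega
    · have : (0 : ℚ) < 1 / c := by positivity
      push_cast at h; linarith
    · have hc6 : 6 < c := Nat.lt_of_one_div_lt_one_div (by omega) (by push_cast at h ⊢; linarith)
      obtain rfl | hc8 : c = 7 ∨ 8 ≤ c := by omega
      · exact .inl ⟨rfl, rfl, rfl⟩
      · have := Nat.one_div_cast_le_one_div_cast (by norm_num) hc8
        right; push_cast at this ⊢; linarith
    · have hc5 : 5 ≤ c := by
        obtain rfl | hb5 : b = 4 ∨ 5 ≤ b := by omega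
        · exact Nat.lt_of_one_div_lt_one_div (by omega) (by push_cast at h ⊢; linarith)
        · omega
      have := Nat.one_div_cast_le_one_div_cast (by norm_num) hc5
      have := Nat.one_div_cast_le_one_div_cast (by norm_num) hb4
      right; push_cast at this ⊢; linarith
  · have hc4 : 4 ≤ c := by
      obtain rfl | hb4 : b = 3 ∨ 4 ≤ b := by omega
      · exact Nat.lt_of_one_div_lt_one_div (by omega) (by push_cast at h ⊢; linarith)
      · omega
    have := Nat.one_div_cast_le_one_div_cast (by norm_num) hc4
    right; push_cast at this ⊢; linarith
  · have := Nat.one_div_cast_le_one_div_cast (by norm_num) ha4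
    right; push_cast at this; linarith

theorem one_div_add_one_div_add_one_div_add_one_div_le {a b c d : ℕ} (ha : 2 ≤ a)
    (hab : a ≤ b) (hbc : b ≤ c) (hcd : c ≤ d) (h : (1 / a + 1 / b + 1 / c + 1 / d : ℚ) < 2) :
    (1 / a + 1 / b + 1 / c + 1 / d : ℚ) ≤ 11 / 6 := by
  have hd : 3 ≤ d := by
    by_contra! hd
    obtain ⟨rfl, rfl, rfl, rfl⟩ : a = 2 ∧ b = 2 ∧ c = 2 ∧ d = 2 := by omega
    norm_num at h
  have := Nat.one_div_cast_le_one_div_cast two_pos ha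
  have := Nat.one_div_cast_le_one_div_cast two_pos (ha.trans hab)
  have := Nat.one_div_cast_le_one_div_cast two_pos (ha.trans (hab.trans hbc))
  have := Nat.one_div_cast_le_one_div_cast three_pos hd
  push_cast at *
  linarith

theorem eq_two_three_seven_or_lt_negOrbifoldEulerChar_zero {l : List ℕ}
    (hsort : l.Pairwise (· ≤ ·)) (hl : ∀ m ∈ l, 2 ≤ m) (hpos : 0 < negOrbifoldEulerChar 0 l) :
    l = [2, 3, 7] ∨ 1 / 42 < negOrbifoldEulerChar 0 l := by
  have hupper := negOrbifoldEulerChar_le_two_mul_sub_two_add_length 0 l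
  have hlower := two_mul_sub_two_add_length_div_two_le_negOrbifoldEulerChar 0 hl
  rw [Nat.cast_zero, mul_zero, zero_sub] at hupper hlower
  obtain hlen | hlen | hlen | hlen :
      l.length ≤ 2 ∨ l.length = 3 ∨ l.length = 4 ∨ 5 ≤ l.length := by omega
  · have : (l.length : ℚ) ≤ 2 := by exact_mod_cast hlen
    linarith
  · obtain ⟨a, b, c, rfl⟩ := List.length_eq_three.mp hlen
    simp only [List.pairwise_cons, List.mem_cons, forall_eq_or_imp, List.not_mem_nil,
      IsEmpty.forall_iff, implies_true, List.Pairwise.nil, and_true] at hsort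
    have hE : negOrbifoldEulerChar 0 [a, b, c] = 1 - (1 / a + 1 / b + 1 / c) := by
      simp only [negOrbifoldEulerChar_cons, negOrbifoldEulerChar_nil]; push_cast; ring
    rw [hE] at hpos ⊢
    rcases eq_two_three_seven_or_one_div_add_one_div_add_one_div_lt (hl a (by simp))
      hsort.1.1 hsort.2 (by linarith) with ⟨rfl, rfl, rfl⟩ | hlt
    · exact .inl rfl
    · right; linarith
  · obtain ⟨a, b, c, d, rfl⟩ := List.length_eq_four.mp hlen
    simp only [List.pairwise_cons, List.mem_cons, forall_eq_or_imp, List.not_mem_nil,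
      IsEmpty.forall_iff, implies_true, List.Pairwise.nil, and_true] at hsort
    have hE : negOrbifoldEulerChar 0 [a, b, c, d] = 2 - (1 / a + 1 / b + 1 / c + 1 / d) := by
      simp only [negOrbifoldEulerChar_cons, negOrbifoldEulerChar_nil]; push_cast; ring
    rw [hE] at hpos ⊢
    have := one_div_add_one_div_add_one_div_add_one_div_le (hl a (by simp))
      hsort.1.1 hsort.2.1.1 hsort.2.2 (by linarith)
    right; linarith
  · have : (5 : ℚ) ≤ l.length := by exact_mod_cast hlen
    right; linarith

theorem eq_two_three_seven_or_lt_negOrbifoldEulerChar {g : ℕ} {l : List ℕ}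
    (hl : ∀ m ∈ l, 2 ≤ m) (hpos : 0 < negOrbifoldEulerChar g l) :
    (g = 0 ∧ (l : Multiset ℕ) = {2, 3, 7}) ∨ 1 / 42 < negOrbifoldEulerChar g l := by
  rcases Nat.eq_zero_or_pos g with rfl | hg
  · obtain ⟨s, hperm, hsort⟩ : ∃ s : List ℕ, s.Perm l ∧ s.Pairwise (· ≤ ·) :=
      ⟨_, Multiset.coe_eq_coe.mp (Multiset.sort_eq _ _), Multiset.pairwise_sort _ _⟩
    rw [← hperm.negOrbifoldEulerChar_eq] at hpos ⊢
    rcases eq_two_three_seven_or_lt_negOrbifoldEulerChar_zero hsort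
      (fun m hm => hl m (hperm.mem_iff.mp hm)) hpos with rfl | hlt
    · exact .inl ⟨rfl, (Multiset.coe_eq_coe.mpr hperm).symm⟩
    · exact .inr hlt
  · right
    linarith [half_le_negOrbifoldEulerChar_of_one_le hg hl hpos]

/-- Combinatorial core of the Hurwitz estimate: for integer genus `g ≥ 0` and
branch orders `n i ≥ 2`, if `(2 - 2g) - Σ (1 - 1/n i) < 0` then
`(2g - 2) + Σ (1 - 1/n i) ≥ 1/42`, with equality exactly for `g = 0` and
branch data `(2,3,7)`. -/
theorem stmt_7 (g k : ℕ) (n : Fin k → ℕ) (hn : ∀ i, 2 ≤ n i)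
    (hneg : ((2 : ℚ) - 2 * g) - ∑ i, (1 - 1 / (n i : ℚ)) < 0) :
    (1 / 42 : ℚ) ≤ (2 * g - 2) + ∑ i, (1 - 1 / (n i : ℚ)) ∧
      (((2 * (g : ℚ) - 2) + ∑ i, (1 - 1 / (n i : ℚ)) = 1 / 42) ↔
        (g = 0 ∧ (List.ofFn n : Multiset ℕ) = ({2, 3, 7} : Multiset ℕ))) := by
  rw [← negOrbifoldEulerChar_ofFn]
  have hpos : 0 < negOrbifoldEulerChar g (List.ofFn n) := by
    rw [negOrbifoldEulerChar_ofFn]; linarith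
  have hl : ∀ m ∈ List.ofFn n, 2 ≤ m := by
    simpa only [List.mem_ofFn, forall_exists_index, forall_apply_eq_imp_iff] using hn
  rcases eq_two_three_seven_or_lt_negOrbifoldEulerChar hl hpos with ⟨rfl, h237⟩ | hlt
  · have hE := negOrbifoldEulerChar_of_coe_eq_two_three_seven h237
    exact ⟨hE.ge, iff_of_true hE ⟨rfl, h237⟩⟩
  · refine ⟨hlt.le, iff_of_false hlt.ne' ?_⟩
    rintro ⟨rfl, h237⟩
    exact hlt.ne' (negOrbifoldEulerChar_of_coe_eq_two_three_seven h237)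
end

section
/- Let G be a finite group acting on a smooth projective surface X, and let R be a G-extremal ray of the invariant cone NE̅(X)^G with K_X · R < 0. Then R is generated by the class of a 1-cycle of the form Σ_{g ∈ G} g·C₀ for some rational curve C₀ on X. -/
/-!
Take a generator `e` of `R` and decompose it by the cone theorem as `e = F + Σ a_C [C]` with
`K · F ≥ 0` and `C` rational. Summing over `G` fixes `e` up to the factor `|G|` and turns every
summand into an invariant class, so extremality of `R` in `NE̅(X)^G` puts each symmetrized summand
on `R`. The symmetrized `F` is `K`-nonnegative, hence zero, so some `a_C Σ_g g[C]` is a nonzero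
element of `R` and generates it.
-/

section Ray

variable (k : Type*) {N : Type*} [Field k] [LinearOrder k] [IsStrictOrderedRing k]
  [AddCommGroup N] [Module k N]

def nonnegRay (e : N) : Set N := {u | ∃ t : k, 0 ≤ t ∧ u = t • e}

variable {k}

theorem nonnegRay_smul_of_pos {t : k} (ht : 0 < t) (e : N) :
    nonnegRay k (t • e) = nonnegRay k e := by
  ext u
  constructor
  · rintro ⟨s, hs, rfl⟩
    exact ⟨s * t, mul_nonneg hs ht.le, smul_smul s t e⟩
  · rintro ⟨s, hs, rfl⟩
    refine ⟨s / t, div_nonneg hs ht.le, ?_⟩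
    rw [smul_smul, div_mul_cancel₀ s ht.ne']

theorem nonnegRay_eq_of_mem {e w : N} (hw : w ∈ nonnegRay k e) (hw0 : w ≠ 0) :
    nonnegRay k w = nonnegRay k e := by
  obtain ⟨t, ht, rfl⟩ := hw
  have ht0 : t ≠ 0 := by rintro rfl; exact hw0 (zero_smul k e)
  exact nonnegRay_smul_of_pos (ht.lt_of_ne' ht0) e

end Ray

section ExtremalSubset

variable {N : Type*} [AddCommMonoid N] {M R : Set N}

theorem forall_mem_of_sum_mem_of_extremal (h0 : 0 ∈ M)
    (hadd : ∀ u v, u ∈ M → v ∈ M → u + v ∈ M)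
    (hext : ∀ u v, u ∈ M → v ∈ M → u + v ∈ R → u ∈ R ∧ v ∈ R)
    {ι : Type*} [DecidableEq ι] (s : Finset ι) {v : ι → N} (hv : ∀ i ∈ s, v i ∈ M)
    (hs : ∑ i ∈ s, v i ∈ R) : ∀ i ∈ s, v i ∈ R := by
  induction s using Finset.induction with
  | empty => simp
  | insert a s ha ih =>
    rw [Finset.forall_mem_insert] at hv ⊢
    rw [Finset.sum_insert ha] at hs
    have hsM : ∑ i ∈ s, v i ∈ M := Finset.sum_induction _ (· ∈ M) hadd h0 hv.2
    obtain ⟨haR, hsR⟩ := hext _ _ hv.1 hsM hs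
    exact ⟨haR, ih hv.2 hsR⟩

/-- The `K`-nonnegative part `F` lies on `R` by extremality, hence vanishes. -/
theorem exists_ne_zero_mem_of_add_sum_mem_of_extremal {α : Type*} [Preorder α] [Zero α]
    (K : N → α) (hKneg : ∀ u ∈ R, u ≠ 0 → K u < 0) (h0 : 0 ∈ M)
    (hadd : ∀ u v, u ∈ M → v ∈ M → u + v ∈ M)
    (hext : ∀ u v, u ∈ M → v ∈ M → u + v ∈ R → u ∈ R ∧ v ∈ R)
    {F : N} (hF : F ∈ M) (hKF : 0 ≤ K F)
    {ι : Type*} [DecidableEq ι] (s : Finset ι) {v : ι → N} (hv : ∀ i ∈ s, v i ∈ M)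
    (hR : F + ∑ i ∈ s, v i ∈ R) (hne : F + ∑ i ∈ s, v i ≠ 0) :
    ∃ i ∈ s, v i ≠ 0 ∧ v i ∈ R := by
  have hsM : ∑ i ∈ s, v i ∈ M := Finset.sum_induction _ (· ∈ M) hadd h0 hv
  obtain ⟨hFR, hsR⟩ := hext _ _ hF hsM hR
  have hF0 : F = 0 := by
    by_contra hF0
    exact (hKneg F hFR hF0).not_ge hKF
  rw [hF0, zero_add] at hne
  obtain ⟨i, hi, hvi⟩ := Finset.exists_ne_zero_of_sum_ne_zero hne
  exact ⟨i, hi, hvi, forall_mem_of_sum_mem_of_extremal h0 hadd hext s hv hsR i hi⟩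

end ExtremalSubset

section Symmetrization

variable {k N G : Type*} [CommSemiring k] [AddCommMonoid N] [Module k N] [Group G] [Fintype G]
  (ρ : G →* (N ≃ₗ[k] N))

theorem apply_sum_apply (h : G) (u : N) : ρ h (∑ g, ρ g u) = ∑ g, ρ g u := by
  rw [map_sum]
  simp only [← LinearEquiv.mul_apply, ← map_mul]
  exact Equiv.sum_comp (Equiv.mulLeft h) fun g => ρ g u

theorem sum_apply_of_forall_apply_eq {u : N} (hu : ∀ g, ρ g u = u) :
    ∑ g, ρ g u = (Fintype.card G : k) • u := by
  simp [hu, Finset.sum_const, Nat.cast_smul_eq_nsmul]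

theorem map_sum_apply_of_invariant (K : N →ₗ[k] k) (hK : ∀ g u, K (ρ g u) = K u) (u : N) :
    K (∑ g, ρ g u) = Fintype.card G * K u := by
  simp [hK, Finset.sum_const, nsmul_eq_mul]

theorem sum_apply_mem_of_invariant {C : Set N} (h0 : (0 : N) ∈ C)
    (hadd : ∀ u v, u ∈ C → v ∈ C → u + v ∈ C) (hinv : ∀ g u, u ∈ C → ρ g u ∈ C)
    ⦃u : N⦄ (hu : u ∈ C) : ∑ g, ρ g u ∈ C ∩ {w | ∀ g, ρ g w = w} :=
  ⟨Finset.sum_induction _ (· ∈ C) hadd h0 fun g _ => hinv g u hu, fun h => apply_sum_apply ρ h u⟩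

end Symmetrization

theorem stmt_13_general (N : Type*) [AddCommGroup N] [Module ℝ N]
    (G : Type*) [Group G] [Fintype G]
    (ρ : G →* (N ≃ₗ[ℝ] N))
    (K : N →ₗ[ℝ] ℝ)
    (hKinv : ∀ (g : G) (u : N), K (ρ g u) = K u)
    (Curves : Type*) (cls : Curves → N) (Rational : Curves → Prop)
    (NEbar : Set N)
    (hNE_curves : ∀ C : Curves, cls C ∈ NEbar)
    (hNE_add : ∀ u v, u ∈ NEbar → v ∈ NEbar → u + v ∈ NEbar)
    (hNE_smul : ∀ (t : ℝ) (u : N), 0 ≤ t → u ∈ NEbar → t • u ∈ NEbar)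
    (hNE_inv : ∀ (g : G) (u : N), u ∈ NEbar → ρ g u ∈ NEbar)
    -- cone theorem: every class decomposes as a `K`-nonnegative part plus a
    -- nonnegative combination of rational curves
    (hcone : ∀ u ∈ NEbar, ∃ (F : N) (s : Finset Curves) (a : Curves → ℝ),
      F ∈ NEbar ∧ 0 ≤ K F ∧ (∀ C ∈ s, Rational C ∧ 0 ≤ a C) ∧
      u = F + ∑ C ∈ s, a C • cls C)
    (R : Set N)
    -- `R` is a `G`-extremal ray of `NE̅(X)^G` with `K_X · R < 0`
    (hR_sub : R ⊆ NEbar ∩ {u | ∀ g : G, ρ g u = u})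
    (e : N) (he : e ≠ 0) (hRe : R = {u | ∃ t : ℝ, 0 ≤ t ∧ u = t • e})
    (hR_extremal : ∀ u v : N,
      u ∈ NEbar ∩ {u | ∀ g : G, ρ g u = u} →
      v ∈ NEbar ∩ {u | ∀ g : G, ρ g u = u} →
      u + v ∈ R → u ∈ R ∧ v ∈ R)
    (hKneg : ∀ u ∈ R, u ≠ 0 → K u < 0) :
    ∃ C₀ : Curves, Rational C₀ ∧
      R = {u | ∃ t : ℝ, 0 ≤ t ∧ u = t • ∑ g : G, ρ g (cls C₀)} := by
  classical
  change R = nonnegRay ℝ e at hRe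
  set M := NEbar ∩ {u | ∀ g : G, ρ g u = u}
  have h0M : (0 : N) ∈ M := hR_sub (hRe ▸ ⟨0, le_rfl, (zero_smul ℝ e).symm⟩)
  have heM : e ∈ M := hR_sub (hRe ▸ ⟨1, zero_le_one, (one_smul ℝ e).symm⟩)
  have hMadd : ∀ u v, u ∈ M → v ∈ M → u + v ∈ M := fun u v hu hv =>
    ⟨hNE_add u v hu.1 hv.1, fun g => by rw [map_add, hu.2 g, hv.2 g]⟩
  have hsym := sum_apply_mem_of_invariant ρ h0M.1 hNE_add hNE_inv
  have hcard : (0 : ℝ) < Fintype.card G := by exact_mod_cast Fintype.card_pos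
  obtain ⟨F, s, a, hF, hKF, hs, hdec⟩ := hcone e heM.1
  have hdecS : (Fintype.card G : ℝ) • e =
      ∑ g, ρ g F + ∑ C ∈ s, a C • ∑ g, ρ g (cls C) := by
    rw [← sum_apply_of_forall_apply_eq ρ heM.2, hdec]
    simp [Finset.sum_add_distrib, Finset.smul_sum, Finset.sum_comm (s := s)]
  have hKsymF : 0 ≤ K (∑ g, ρ g F) := by
    rw [map_sum_apply_of_invariant ρ K hKinv]; positivity
  have hsummands : ∀ C ∈ s, a C • ∑ g, ρ g (cls C) ∈ M := fun C hC =>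
    ⟨hNE_smul _ _ (hs C hC).2 (hsym (hNE_curves C)).1,
      fun g => by rw [map_smul, (hsym (hNE_curves C)).2 g]⟩
  obtain ⟨C₀, hC₀s, hC₀0, hC₀R⟩ := exists_ne_zero_mem_of_add_sum_mem_of_extremal K hKneg h0M
    hMadd hR_extremal (hsym hF) hKsymF s hsummands
    (hdecS ▸ hRe ▸ ⟨_, hcard.le, rfl⟩) (hdecS ▸ smul_ne_zero hcard.ne' he)
  have ha : 0 < a C₀ := (hs C₀ hC₀s).2.lt_of_ne' (by rintro h; simp [h] at hC₀0)
  refine ⟨C₀, (hs C₀ hC₀s).1, ?_⟩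
  rw [hRe] at hC₀R ⊢
  rw [← nonnegRay_eq_of_mem hC₀R hC₀0, nonnegRay_smul_of_pos ha]
  rfl

/-- A `K_X`-negative `G`-extremal ray of the invariant cone `NE̅(X)^G` is generated by
the class of a 1-cycle `Σ_{g ∈ G} g·C₀` for some rational curve `C₀`.  The smooth
projective surface with `G`-action is presented through its numerical data: `N = N₁(X)`
with the `G`-representation `ρ`, canonical functional `K`, the irreducible curves
`Curves` with `G`-action `act`, classes `cls` and the predicate `Rational`, the cone of
curves `NEbar` and the cone theorem decomposition. -/
theorem stmt_13 (N : Type*) [AddCommGroup N] [Module ℝ N]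
    (G : Type*) [Group G] [Fintype G]
    (ρ : G →* (N ≃ₗ[ℝ] N))
    (K : N →ₗ[ℝ] ℝ)
    (hKinv : ∀ (g : G) (u : N), K (ρ g u) = K u)
    (Curves : Type*) (cls : Curves → N) (Rational : Curves → Prop)
    (act : G → Curves → Curves)
    (hact : ∀ (g : G) (C : Curves), cls (act g C) = ρ g (cls C))
    (hactRat : ∀ (g : G) (C : Curves), Rational C → Rational (act g C))
    (NEbar : Set N)
    (hNE_curves : ∀ C : Curves, cls C ∈ NEbar)
    (hNE_add : ∀ u v, u ∈ NEbar → v ∈ NEbar → u + v ∈ NEbar)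
    (hNE_smul : ∀ (t : ℝ) (u : N), 0 ≤ t → u ∈ NEbar → t • u ∈ NEbar)
    (hNE_inv : ∀ (g : G) (u : N), u ∈ NEbar → ρ g u ∈ NEbar)
    -- cone theorem: every class decomposes as a `K`-nonnegative part plus a
    -- nonnegative combination of rational curves
    (hcone : ∀ u ∈ NEbar, ∃ (F : N) (s : Finset Curves) (a : Curves → ℝ),
      F ∈ NEbar ∧ 0 ≤ K F ∧ (∀ C ∈ s, Rational C ∧ 0 ≤ a C) ∧
      u = F + ∑ C ∈ s, a C • cls C)
    (R : Set N)
    -- `R` is a `G`-extremal ray of `NE̅(X)^G` with `K_X · R < 0`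
    (hR_sub : R ⊆ NEbar ∩ {u | ∀ g : G, ρ g u = u})
    (e : N) (he : e ≠ 0) (hRe : R = {u | ∃ t : ℝ, 0 ≤ t ∧ u = t • e})
    (hR_extremal : ∀ u v : N,
      u ∈ NEbar ∩ {u | ∀ g : G, ρ g u = u} →
      v ∈ NEbar ∩ {u | ∀ g : G, ρ g u = u} →
      u + v ∈ R → u ∈ R ∧ v ∈ R)
    (hKneg : ∀ u ∈ R, u ≠ 0 → K u < 0) :
    ∃ C₀ : Curves, Rational C₀ ∧
      R = {u | ∃ t : ℝ, 0 ≤ t ∧ u = t • ∑ g : G, ρ g (cls C₀)} :=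
  stmt_13_general N G ρ K hKinv Curves cls Rational NEbar hNE_curves hNE_add hNE_smul hNE_inv hcone
    R hR_sub e he hRe hR_extremal hKneg
end
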